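/- Theorem 1: a categorized choice rule satisfies within-category fairness, the over-and-above principle, and quota-filling subject to eligibility if and only if it is the over-and-above choice rule C^OA (i.e., for every set of applicants A and every category c ∈ {o} ∪ R, its category-c selection from A equals that of C^OA). -/

import Mathlib

open Finset

variable {α : Type*} [Fintype α] [DecidableEq α] [LinearOrder α]
variable {ρ : Type*} [Fintype ρ] [DecidableEq ρ]

/-- The top-`k` elements of `A` under the linear (merit) order on `α`, where
higher means more meritorious: the members of `A` that have fewer than `k`
strictly higher-ranked elements in `A`.  If `|A| ≤ k` this is all of `A`. -/
def topk (k : ℕ) (A : Finset α) : Finset α :=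
  A.filter fun i => (A.filter fun j => i < j).card < k

/-- Open-category selection of the over-and-above choice rule: the
`min(qo, |A ∩ acc|)` highest-ranked acceptable applicants. -/
def oaOpen (acc : Finset α) (qo : ℕ) (A : Finset α) : Finset α :=
  topk qo (A ∩ acc)

/-- Reserve-category-`r` selection of the over-and-above choice rule: the
`q r` highest-ranked acceptable type-`r` applicants not selected for the
open category. -/
def oaRes (acc : Finset α) (t : α → Option ρ) (qo : ℕ) (q : ρ → ℕ) (r : ρ)
    (A : Finset α) : Finset α :=
  topk (q r) (((A ∩ acc) \ oaOpen acc qo A).filter fun i => t i = some r)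

/-- The set of applicants chosen by the over-and-above choice rule. -/
def oaChosen (acc : Finset α) (t : α → Option ρ) (qo : ℕ) (q : ρ → ℕ)
    (A : Finset α) : Finset α :=
  oaOpen acc qo A ∪ Finset.univ.biUnion fun r => oaRes acc t qo q r A

/-- The over-and-above choice rule, by category (`none` is the open category,
`some r` is reserve category `r`). -/
def oaSel (acc : Finset α) (t : α → Option ρ) (qo : ℕ) (q : ρ → ℕ) :
    Option ρ → Finset α → Finset α
  | none => oaOpen acc qo
  | some r => oaRes acc t qo q r

/-- A categorized choice rule: for each set of applicants it selects a
pairwise-disjoint family consisting of an open-category selection (acceptable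
applicants, at most `qo` of them) and, for each reserve category `r`, a
category-`r` selection (acceptable type-`r` applicants, at most `q r`). -/
structure CatChoice (acc : Finset α) (t : α → Option ρ) (qo : ℕ) (q : ρ → ℕ) where
  sel : Option ρ → Finset α → Finset α
  sel_open_subset : ∀ A : Finset α, sel none A ⊆ A ∩ acc
  sel_open_card : ∀ A : Finset α, (sel none A).card ≤ qo
  sel_res_subset : ∀ (r : ρ) (A : Finset α),
    sel (some r) A ⊆ (A ∩ acc).filter fun i => t i = some r
  sel_res_card : ∀ (r : ρ) (A : Finset α), (sel (some r) A).card ≤ q r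
  sel_disjoint : ∀ c c' : Option ρ, c ≠ c' → ∀ A : Finset α,
    Disjoint (sel c A) (sel c' A)

/-- The chosen set of a categorized choice rule. -/
def CatChoice.chosen {acc : Finset α} {t : α → Option ρ} {qo : ℕ} {q : ρ → ℕ}
    (C : CatChoice acc t qo q) (A : Finset α) : Finset α :=
  Finset.univ.biUnion fun c : Option ρ => C.sel c A

/-- Over-and-above principle: every acceptable applicant whose rank among the
acceptable applicants of `A` is at most `qo` is selected for an open-category
position. -/
def OverAndAbovePrinciple {acc : Finset α} {t : α → Option ρ} {qo : ℕ} {q : ρ → ℕ}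
    (C : CatChoice acc t qo q) : Prop :=
  ∀ A : Finset α, ∀ i ∈ A ∩ acc,
    ((A ∩ acc).filter fun j => i < j).card < qo → i ∈ C.sel none A

/-- Within-category fairness: among acceptable applicants of the same
category, if a lower-merit one is chosen then so is a higher-merit one. -/
def WithinCategoryFair {acc : Finset α} {t : α → Option ρ} {qo : ℕ} {q : ρ → ℕ}
    (C : CatChoice acc t qo q) : Prop :=
  ∀ A : Finset α, ∀ i ∈ A, ∀ j ∈ A, i ∈ acc → j ∈ acc → t i = t j → j < i →
    j ∈ C.chosen A → i ∈ C.chosen A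

/-- Quota-filling subject to eligibility: if an acceptable reserve-category-`r`
applicant is left unchosen, then all `q r` category-`r` positions are filled. -/
def QuotaFilling {acc : Finset α} {t : α → Option ρ} {qo : ℕ} {q : ρ → ℕ}
    (C : CatChoice acc t qo q) : Prop :=
  ∀ A : Finset α, ∀ i ∈ A, i ∈ acc → ∀ r : ρ, t i = some r → i ∉ C.chosen A →
    (C.sel (some r) A).card = q r

/-!
The open selection is pinned down first: the over-and-above principle puts the top
`min(qo, |A ∩ acc|)` acceptable applicants into it, and the capacity `qo` leaves no room for
anyone else. Given the open selection, a category-`r` selection lies in the pool of acceptable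
type-`r` applicants not selected for the open category. Since these applicants can only be chosen
for category `r`, fairness makes the selection an upper set of the pool, and quota-filling makes
its size `min(q r, |pool|)`; a finite chain has exactly one upper set of each size, namely its
top-`k` elements.
-/

section Topk

variable {α : Type*} [LinearOrder α] {k : ℕ} {A S : Finset α} {i j : α}

lemma mem_topk : i ∈ topk k A ↔ i ∈ A ∧ #{j ∈ A | i < j} < k := mem_filter

lemma topk_subset : topk k A ⊆ A := filter_subset _ _

lemma mem_topk_of_lt (hj : j ∈ topk k A) (hi : i ∈ A) (hji : j < i) : i ∈ topk k A :=
  mem_topk.2 ⟨hi, (card_le_card fun x hx => by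
    simp only [mem_filter] at hx ⊢; exact ⟨hx.1, hji.trans hx.2⟩).trans_lt (mem_topk.1 hj).2⟩

lemma topk_succ_insert [DecidableEq α] {a : α} (ha : ∀ x ∈ A, x < a) :
    topk (k + 1) (insert a A) = insert a (topk k A) := by
  have ha' : a ∉ A := fun h => (ha a h).false
  ext x
  rcases eq_or_ne x a with rfl | hxa
  · have : {j ∈ insert x A | x < j} = ∅ :=
      filter_eq_empty_iff.2 fun j hj => by
        rcases mem_insert.1 hj with rfl | hj
        exacts [lt_irrefl j, (ha j hj).not_gt]
    simp [mem_topk, this]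
  · simp only [mem_topk, mem_insert, hxa, false_or]
    refine and_congr_right fun hx => ?_
    rw [filter_insert, if_pos (ha x hx), card_insert_of_notMem (fun h => ha' (mem_filter.1 h).1)]
    omega

lemma card_topk (k : ℕ) (A : Finset α) : #(topk k A) = min k #A := by
  classical
  induction A using Finset.induction_on_max generalizing k with
  | empty => simp [topk]
  | insert a A ha ih =>
    have ha' : a ∉ A := fun h => (ha a h).false
    cases k with
    | zero => simp [topk]
    | succ k => rw [topk_succ_insert ha, card_insert_of_notMem (fun h => ha' (topk_subset h)),
        card_insert_of_notMem ha', ih]; omega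

lemma eq_topk_of_topk_subset (hS : topk k A ⊆ S) (hSA : S ⊆ A) (hSk : #S ≤ k) :
    S = topk k A :=
  (eq_of_subset_of_card_le hS (by rw [card_topk]; exact le_min hSk (card_le_card hSA))).symm

lemma eq_topk_of_upward_closed (hSA : S ⊆ A) (hup : ∀ j ∈ S, ∀ i ∈ A, j < i → i ∈ S)
    (hS : #S = min k #A) : S = topk k A := by
  refine eq_of_subset_of_card_le (fun j hj => mem_topk.2 ⟨hSA hj, ?_⟩) (by rw [card_topk, hS])
  have habove : {i ∈ A | j < i} ⊂ S :=
    (ssubset_iff_of_subset fun i hi => hup j hj i (mem_filter.1 hi).1 (mem_filter.1 hi).2).2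
      ⟨j, hj, fun h => lt_irrefl j (mem_filter.1 h).2⟩
  exact (card_lt_card habove).trans_le (hS ▸ min_le_left _ _)

lemma card_topk_of_mem_of_notMem (hi : i ∈ A) (hi' : i ∉ topk k A) : #(topk k A) = k := by
  have := card_lt_card ((ssubset_iff_of_subset topk_subset).2 ⟨i, hi, hi'⟩)
  rw [card_topk] at this ⊢
  omega

end Topk

section ReservePool

variable {α : Type*} [DecidableEq α] [LinearOrder α] {ρ : Type*} [DecidableEq ρ]
  {acc : Finset α} {t : α → Option ρ} {qo : ℕ} {A : Finset α} {i : α} {r : ρ}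

def oaResPool (acc : Finset α) (t : α → Option ρ) (qo : ℕ) (r : ρ) (A : Finset α) : Finset α :=
  ((A ∩ acc) \ oaOpen acc qo A).filter fun i => t i = some r

lemma mem_oaResPool :
    i ∈ oaResPool acc t qo r A ↔ i ∈ A ∧ i ∈ acc ∧ i ∉ oaOpen acc qo A ∧ t i = some r := by
  simp only [oaResPool, mem_filter, mem_sdiff, mem_inter, and_assoc]

end ReservePool

namespace CatChoice

variable {α : Type*} [DecidableEq α] {ρ : Type*} [DecidableEq ρ]
  {acc : Finset α} {t : α → Option ρ} {qo : ℕ} {q : ρ → ℕ} {A : Finset α} {i : α}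
  (C : CatChoice acc t qo q)

lemma mem_chosen_iff_of_type [Fintype ρ] {c : Option ρ} (hi : t i = c) :
    i ∈ C.chosen A ↔ i ∈ C.sel none A ∨ i ∈ C.sel c A := by
  simp only [chosen, mem_biUnion, mem_univ, true_and]
  constructor
  · rintro ⟨_ | r, hr⟩
    · exact Or.inl hr
    · obtain rfl : c = some r := hi ▸ (mem_filter.1 (C.sel_res_subset r A hr)).2
      exact Or.inr hr
  · rintro (h | h)
    exacts [⟨_, h⟩, ⟨_, h⟩]

variable [LinearOrder α]

lemma sel_none_eq_oaOpen (hoa : OverAndAbovePrinciple C) (A : Finset α) :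
    C.sel none A = oaOpen acc qo A :=
  eq_topk_of_topk_subset (fun i hi => hoa A i (topk_subset hi) (mem_topk.1 hi).2)
    (C.sel_open_subset A) (C.sel_open_card A)

variable [Fintype ρ]

lemma sel_some_eq_oaRes (hfair : WithinCategoryFair C) (hqf : QuotaFilling C)
    (hopen : C.sel none A = oaOpen acc qo A) (r : ρ) :
    C.sel (some r) A = oaRes acc t qo q r A := by
  set S := C.sel (some r) A
  set B := oaResPool acc t qo r A
  have hSB : S ⊆ B := fun i hi => by
    obtain ⟨hiA, hacc⟩ := mem_inter.1 (mem_filter.1 (C.sel_res_subset r A hi)).1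
    refine mem_oaResPool.2 ⟨hiA, hacc, fun ho => ?_, (mem_filter.1 (C.sel_res_subset r A hi)).2⟩
    exact disjoint_left.1 (C.sel_disjoint _ _ (Option.some_ne_none r) A) hi (hopen ▸ ho)
  have hchosen : ∀ i ∈ B, i ∈ C.chosen A ↔ i ∈ S := fun i hi => by
    obtain ⟨-, -, hio, htr⟩ := mem_oaResPool.1 hi
    rw [C.mem_chosen_iff_of_type htr, hopen, or_iff_right hio]
  refine eq_topk_of_upward_closed hSB (fun j hj i hi hji => ?_) ?_
  · obtain ⟨hiA, hiacc, -, hti⟩ := mem_oaResPool.1 hi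
    obtain ⟨hjA, hjacc, -, htj⟩ := mem_oaResPool.1 (hSB hj)
    exact (hchosen i hi).1 <| hfair A i hiA j hjA hiacc hjacc (hti.trans htj.symm) hji <|
      (hchosen j (hSB hj)).2 hj
  · show #S = min (q r) #B
    have hSq : #S ≤ q r := C.sel_res_card r A
    have hSB' := card_le_card hSB
    by_cases hBS : B ⊆ S
    · have := card_le_card hBS
      omega
    · obtain ⟨i, hi, hiS⟩ := not_subset.1 hBS
      obtain ⟨hiA, hiacc, -, htr⟩ := mem_oaResPool.1 hi
      have : #S = q r := hqf A i hiA hiacc r htr (mt (hchosen i hi).1 hiS)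
      omega

variable {C}

lemma withinCategoryFair_of_sel_eq_oaSel
    (h : ∀ (A : Finset α) (c : Option ρ), C.sel c A = oaSel acc t qo q c A) :
    WithinCategoryFair C := by
  intro A i hiA j hjA hiacc hjacc htij hji hj
  rw [C.mem_chosen_iff_of_type htij]
  rw [C.mem_chosen_iff_of_type rfl] at hj
  simp only [h] at hj ⊢
  have hopen : j ∈ oaOpen acc qo A → i ∈ oaOpen acc qo A := fun hj =>
    mem_topk_of_lt hj (mem_inter.2 ⟨hiA, hiacc⟩) hji
  rcases hj with hj | hj
  · exact Or.inl (hopen hj)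
  · rcases htj : t j with _ | r <;> rw [htj] at hj
    · exact Or.inl (hopen hj)
    · by_cases hio : i ∈ oaOpen acc qo A
      · exact Or.inl hio
      · exact Or.inr <| mem_topk_of_lt hj (mem_oaResPool.2 ⟨hiA, hiacc, hio, htij.trans htj⟩) hji

lemma quotaFilling_of_sel_eq_oaSel
    (h : ∀ (A : Finset α) (c : Option ρ), C.sel c A = oaSel acc t qo q c A) :
    QuotaFilling C := fun A i hiA hiacc r htr hi => by
  rw [C.mem_chosen_iff_of_type htr, h, h, not_or] at hi
  rw [h]
  exact card_topk_of_mem_of_notMem (mem_oaResPool.2 ⟨hiA, hiacc, hi.1, htr⟩) hi.2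

end CatChoice

/-- Theorem 1. A categorized choice rule satisfies
within-category fairness, the over-and-above principle, and quota-filling
subject to eligibility if and only if it is the over-and-above choice rule:
for every set of applicants and every category (open or reserve), its
selection equals that of the over-and-above choice rule. -/
theorem over_and_above_characterization
    (acc : Finset α) (t : α → Option ρ) (qo : ℕ) (q : ρ → ℕ)
    (C : CatChoice acc t qo q) :
    (WithinCategoryFair C ∧ OverAndAbovePrinciple C ∧ QuotaFilling C) ↔
      ∀ (A : Finset α) (c : Option ρ), C.sel c A = oaSel acc t qo q c A := by
  constructor
  · rintro ⟨hfair, hoa, hqf⟩ A (_ | r)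
    · exact C.sel_none_eq_oaOpen hoa A
    · exact C.sel_some_eq_oaRes hfair hqf (C.sel_none_eq_oaOpen hoa A) r
  · intro h
    exact ⟨CatChoice.withinCategoryFair_of_sel_eq_oaSel h,
      fun A i hi hrank => h A none ▸ mem_topk.2 ⟨hi, hrank⟩, CatChoice.quotaFilling_of_sel_eq_oaSel h⟩
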